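/- arXiv:2508.12557 — 5 statements merged into one kernel-verified Lean document; each statement's English description precedes it below -/
import Mathlib

section
/- The matrix K is reversible with respect to π; that is, π_x · K_{x,y} = π_y · K_{y,x} for all permutations x and y of {1,…,n}. -/
/-!
Both sides vanish unless `y = x * swap (r-1) r` for an adjacent pair of positions, which is a
symmetric relation. Swapping two adjacent positions preserves the relative order of every other
pair of positions, so the products `∏_{s<t} p_{x_s x_t}` for `x` and `x * swap (r-1) r` differ only
in the factor of the swapped pair; this is exactly detailed balance.
-/
open Finset

/-- Off-diagonal entries of the adjacent-transposition chain: `Koff n p x y = p_{ji}/(n-1)`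
if `y` is obtained from `x` by swapping the entries in (0-based) positions `r-1` and `r`
for some `1 ≤ r ≤ n-1`, and `0` otherwise. Here `x r` is the entry in position `r`. -/
noncomputable def Koff (n : ℕ) (p : Fin n → Fin n → ℝ)
    (x y : Equiv.Perm (Fin n)) : ℝ :=
  ∑ r : Fin n,
    if 1 ≤ (r : ℕ) ∧
        y = x * Equiv.swap (⟨(r : ℕ) - 1, Nat.lt_of_le_of_lt (Nat.sub_le _ _) r.isLt⟩ : Fin n) r
    then p (x r) (x ⟨(r : ℕ) - 1, Nat.lt_of_le_of_lt (Nat.sub_le _ _) r.isLt⟩) / ((n : ℝ) - 1)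
    else 0

/-- The transition matrix `K` of the adjacent-transposition chain on permutations. -/
noncomputable def Kmat (n : ℕ) (p : Fin n → Fin n → ℝ) :
    Matrix (Equiv.Perm (Fin n)) (Equiv.Perm (Fin n)) ℝ :=
  Matrix.of fun x y =>
    if x = y then 1 - ∑ z ∈ Finset.univ.erase x, Koff n p x z
    else Koff n p x y

/-- Unnormalized stationary weight `∏_{r<s} p_{x_r,x_s}`. -/
noncomputable def piUn (n : ℕ) (p : Fin n → Fin n → ℝ) (x : Equiv.Perm (Fin n)) : ℝ :=
  ∏ rs ∈ Finset.univ.filter (fun rs : Fin n × Fin n => rs.1 < rs.2), p (x rs.1) (x rs.2)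

/-- The stationary distribution `π`. -/
noncomputable def piDist (n : ℕ) (p : Fin n → Fin n → ℝ) (x : Equiv.Perm (Fin n)) : ℝ :=
  (∑ y : Equiv.Perm (Fin n), piUn n p y)⁻¹ * piUn n p x

open Equiv

section AdjacentSwap

variable {α : Type*} [LinearOrder α] {a b : α}

theorem CovBy.swap_apply_lt_swap_apply (h : a ⋖ b) {s t : α} (hst : s < t)
    (hne : (s, t) ≠ (a, b)) : swap a b s < swap a b t := by
  have hab := h.lt
  have hbelow : ∀ c, c < b → c ≤ a := fun _ => h.le_of_lt
  have habove : ∀ c, a < c → b ≤ c := fun _ => h.ge_of_gt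
  simp only [swap_apply_def, ne_eq, Prod.mk.injEq] at hne ⊢
  split_ifs <;> grind

theorem CovBy.prod_swap_lt_pairs [Fintype α] {M : Type*} [CommMonoid M] (h : a ⋖ b)
    (F : α → α → M) :
    (∏ st ∈ univ.filter (fun st : α × α => st.1 < st.2), F (swap a b st.1) (swap a b st.2)) *
        F a b =
      (∏ st ∈ univ.filter (fun st : α × α => st.1 < st.2), F st.1 st.2) * F b a := by
  set S := univ.filter (fun st : α × α => st.1 < st.2)
  have hab : (a, b) ∈ S := by simp [S, h.lt]
  have hmaps : ∀ st ∈ S.erase (a, b), Prod.map (swap a b) (swap a b) st ∈ S.erase (a, b) := by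
    rintro ⟨s, t⟩ hst
    simp only [S, mem_erase, mem_filter, mem_univ, true_and, ne_eq, Prod.map] at hst ⊢
    refine ⟨fun heq => ?_, h.swap_apply_lt_swap_apply hst.2 hst.1⟩
    simp only [Prod.mk.injEq, swap_apply_eq_iff, swap_apply_left, swap_apply_right] at heq
    obtain ⟨rfl, rfl⟩ := heq
    exact lt_asymm hst.2 h.lt
  have hrest : ∏ st ∈ S.erase (a, b), F (swap a b st.1) (swap a b st.2) =
      ∏ st ∈ S.erase (a, b), F st.1 st.2 :=
    prod_nbij' _ _ hmaps hmaps (by simp) (by simp) fun _ _ => rfl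
  rw [← mul_prod_erase S _ hab, ← mul_prod_erase S _ hab, swap_apply_left, swap_apply_right,
    hrest]
  dsimp only
  ac_rfl

end AdjacentSwap

theorem piUn_mul_swap {n : ℕ} (p : Fin n → Fin n → ℝ) (x : Perm (Fin n)) {a b : Fin n}
    (h : a ⋖ b) : piUn n p (x * swap a b) * p (x a) (x b) = piUn n p x * p (x b) (x a) :=
  h.prod_swap_lt_pairs fun u v => p (x u) (x v)

theorem piDist_mul_swap {n : ℕ} (p : Fin n → Fin n → ℝ) (x : Perm (Fin n)) {a b : Fin n}
    (h : a ⋖ b) : piDist n p (x * swap a b) * p (x a) (x b) = piDist n p x * p (x b) (x a) := by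
  simp only [piDist, mul_assoc, piUn_mul_swap p x h]

theorem K_reversible_general (n : ℕ) (p : Fin n → Fin n → ℝ)
    (x y : Equiv.Perm (Fin n)) :
    piDist n p x * Kmat n p x y = piDist n p y * Kmat n p y x := by
  rcases eq_or_ne x y with rfl | hxy
  · rfl
  simp only [Kmat, Matrix.of_apply, if_neg hxy, if_neg hxy.symm, Koff, mul_sum]
  refine sum_congr rfl fun r _ => ?_
  set a : Fin n := ⟨r - 1, by omega⟩ with ha
  have hsymm : x = y * swap a r ↔ y = x * swap a r :=
    eq_comm.trans (mul_swap_involutive a r).eq_iff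
  simp only [hsymm]
  split_ifs with h
  · obtain ⟨hr, rfl⟩ := h
    have hcov : a ⋖ r := Fin.covBy_iff.2 <| Nat.covBy_iff_add_one_eq.2 <| by simp only [ha]; omega
    simp only [Perm.mul_apply, swap_apply_left, swap_apply_right, mul_div_assoc',
      piDist_mul_swap p x hcov]
  · rw [mul_zero, mul_zero]

/-- `K` is reversible with respect to `pi`:
`pi_x * K_{x,y} = pi_y * K_{y,x}` for all permutations `x, y`. -/
theorem K_reversible (n : ℕ) (hn : 2 ≤ n) (p : Fin n → Fin n → ℝ)
    (hp : ∀ i j : Fin n, i ≠ j → p i j ∈ Set.Ioo (0 : ℝ) 1)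
    (hps : ∀ i j : Fin n, i ≠ j → p i j + p j i = 1)
    (x y : Equiv.Perm (Fin n)) :
    piDist n p x * Kmat n p x y = piDist n p y * Kmat n p y x :=
  K_reversible_general n p x y
end

section
/- Let D := diag(π) be the diagonal matrix with entries π_x, let E := diag(sgn(x)) be the diagonal matrix with entries the sign of the permutation x, and let B be the permutation matrix of the reversal map x ↦ x^rev, where (x^rev)_r = x_{n+1−r} (so B_{x,y} = 1 if y = x^rev and B_{x,y} = 0 otherwise). Then C := E·B·D is invertible and I − K = C·K·C^{−1}; in particular, the matrices K and I − K are similar. -/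
open Finset

/-- The permutation matrix `B` of the reversal map `x ↦ x^rev`, where
`(x^rev)_r = x_{n+1-r}` (0-based: `x^rev = x ∘ Fin.rev`). -/
noncomputable def Bmat (n : ℕ) : Matrix (Equiv.Perm (Fin n)) (Equiv.Perm (Fin n)) ℝ :=
  Matrix.of fun x y => if y = x * Fin.revPerm then 1 else 0

def prF {n : ℕ} (r : Fin n) : Fin n := ⟨(r : ℕ) - 1, Nat.lt_of_le_of_lt (Nat.sub_le _ _) r.isLt⟩

@[simp] lemma prF_val {n : ℕ} (r : Fin n) : (prF r : ℕ) = (r : ℕ) - 1 := rfl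

lemma Koff_eq (n : ℕ) (p : Fin n → Fin n → ℝ) (x y : Equiv.Perm (Fin n)) :
    Koff n p x y = ∑ r : Fin n,
      if 1 ≤ (r : ℕ) ∧ y = x * Equiv.swap (prF r) r
      then p (x r) (x (prF r)) / ((n : ℝ) - 1) else 0 := rfl

lemma prF_ne {n : ℕ} (r : Fin n) (hr : 1 ≤ (r : ℕ)) : prF r ≠ r := by
  intro h
  have := congrArg Fin.val h
  simp at this; omega

lemma swap_prF_ne_one {n : ℕ} (r : Fin n) (hr : 1 ≤ (r : ℕ)) :
    Equiv.swap (prF r) r ≠ 1 := by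
  intro h
  have := Equiv.swap_apply_left (prF r) r
  rw [h] at this
  simp at this
  exact prF_ne r hr this

lemma Koff_self (n : ℕ) (p : Fin n → Fin n → ℝ) (x : Equiv.Perm (Fin n)) :
    Koff n p x x = 0 := by
  rw [Koff_eq]
  refine Finset.sum_eq_zero fun r _ => ?_
  rw [if_neg]
  rintro ⟨hr, h⟩
  exact swap_prF_ne_one r hr (by rwa [left_eq_mul] at h)

lemma Koff_single {n : ℕ} (p : Fin n → Fin n → ℝ) (x : Equiv.Perm (Fin n))
    (r : Fin n) (hr : 1 ≤ (r : ℕ)) :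
    Koff n p x (x * Equiv.swap (prF r) r) = p (x r) (x (prF r)) / ((n : ℝ) - 1) := by
  rw [Koff_eq]
  rw [Finset.sum_eq_single r]
  · rw [if_pos ⟨hr, rfl⟩]
  · intro r' _ hne
    rw [if_neg]
    rintro ⟨hr', h⟩
    have h2 : Equiv.swap (prF r) r = Equiv.swap (prF r') r' := mul_left_cancel h
    have h3 : Equiv.swap (prF r) r r' = prF r' := by rw [h2, Equiv.swap_apply_right]
    by_cases hc : r' = prF r
    · rw [hc, Equiv.swap_apply_left] at h3
      have e1 := congrArg Fin.val h3
      have e2 := congrArg Fin.val hc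
      simp at e1 e2
      omega
    · rw [Equiv.swap_apply_of_ne_of_ne hc hne] at h3
      have e1 := congrArg Fin.val h3
      simp at e1
      omega
  · intro h; exact absurd (Finset.mem_univ r) h

lemma Koff_of_not {n : ℕ} (p : Fin n → Fin n → ℝ) (x y : Equiv.Perm (Fin n))
    (h : ¬ ∃ r : Fin n, 1 ≤ (r : ℕ) ∧ y = x * Equiv.swap (prF r) r) :
    Koff n p x y = 0 := by
  rw [Koff_eq]
  exact Finset.sum_eq_zero fun r _ => if_neg (fun hc => h ⟨r, hc⟩)

lemma revPerm_sq {n : ℕ} : (Fin.revPerm : Equiv.Perm (Fin n)) * Fin.revPerm = 1 := by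
  ext i
  simp

def ggF {n : ℕ} (r : Fin n) : Fin n := if (r : ℕ) = 0 then r else Fin.rev (prF r)

lemma ggF_pos {n : ℕ} (r : Fin n) (hr : 1 ≤ (r : ℕ)) : ggF r = Fin.rev (prF r) :=
  if_neg (by omega)

lemma ggF_val_pos {n : ℕ} (r : Fin n) (hr : 1 ≤ (r : ℕ)) : ((ggF r : Fin n) : ℕ) = n - (r : ℕ) := by
  rw [ggF_pos r hr]
  have h1 := Fin.val_rev (prF r)
  have h2 := r.isLt
  simp only [prF_val] at h1
  omega

lemma ggF_inv {n : ℕ} (r : Fin n) : ggF (ggF r) = r := by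
  by_cases hr : 1 ≤ (r : ℕ)
  · have h2 := r.isLt
    have h3 : 1 ≤ ((ggF r : Fin n) : ℕ) := by rw [ggF_val_pos r hr]; omega
    have h4 := ggF_val_pos (ggF r) h3
    rw [ggF_val_pos r hr] at h4
    ext
    omega
  · have h0 : (r : ℕ) = 0 := by omega
    simp [ggF, h0]

lemma Koff_rev (n : ℕ) (p : Fin n → Fin n → ℝ) (x y : Equiv.Perm (Fin n)) :
    Koff n p (x * Fin.revPerm) (y * Fin.revPerm) = Koff n (fun i j => p j i) x y := by
  rw [Koff_eq, Koff_eq]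
  refine Finset.sum_nbij' (fun r => ggF r) (fun r => ggF r)
    (fun _ _ => Finset.mem_univ _) (fun _ _ => Finset.mem_univ _)
    (fun r _ => ggF_inv r) (fun r _ => ggF_inv r) ?_
  intro r _
  by_cases hr : 1 ≤ (r : ℕ)
  · have hlt := r.isLt
    set s : Fin n := ggF r with hsdef
    have hsval : (s : ℕ) = n - (r : ℕ) := ggF_val_pos r hr
    have hs : s = Fin.rev (prF r) := ggF_pos r hr
    have hs1 : Fin.rev r = prF s := by
      have h1 := Fin.val_rev r
      ext
      simp only [prF_val, hsval]
      omega
    have hsge : 1 ≤ (s : ℕ) := by omega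
    have key : x * Fin.revPerm * Equiv.swap (prF r) r = x * Equiv.swap (prF s) s * Fin.revPerm := by
      rw [mul_assoc, mul_assoc]
      congr 1
      rw [Equiv.mul_swap_eq_swap_mul]
      simp only [Fin.revPerm_apply]
      rw [hs1, ← hs, Equiv.swap_comm]
    have hv1 : (x * Fin.revPerm : Equiv.Perm (Fin n)) r = x (prF s) := by
      rw [Equiv.Perm.mul_apply, Fin.revPerm_apply, hs1]
    have hv2 : (x * Fin.revPerm : Equiv.Perm (Fin n)) (prF r) = x s := by
      rw [Equiv.Perm.mul_apply, Fin.revPerm_apply, hs]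
    refine if_congr ?_ ?_ rfl
    · constructor
      · rintro ⟨_, hc⟩
        refine ⟨hsge, ?_⟩
        rw [key] at hc
        exact mul_right_cancel hc
      · rintro ⟨_, hc⟩
        exact ⟨hr, by rw [key, hc]⟩
    · rw [hv1, hv2]
  · have h0 : (r : ℕ) = 0 := by omega
    have hg0 : ggF r = r := by rw [ggF, if_pos h0]
    beta_reduce
    rw [if_neg (by rintro ⟨h1, _⟩; omega)]
    rw [hg0, if_neg (by rintro ⟨h1, _⟩; omega)]

lemma rowsum (n : ℕ) (p : Fin n → Fin n → ℝ) (x : Equiv.Perm (Fin n)) :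
    ∑ z ∈ Finset.univ.erase x, Koff n p x z =
      ∑ r : Fin n, if 1 ≤ (r : ℕ) then p (x r) (x (prF r)) / ((n : ℝ) - 1) else 0 := by
  have h1 : ∑ z ∈ Finset.univ.erase x, Koff n p x z = ∑ z : Equiv.Perm (Fin n), Koff n p x z := by
    refine Finset.sum_subset (Finset.erase_subset _ _) ?_
    intro z _ hz
    have : z = x := by
      by_contra hne
      exact hz (Finset.mem_erase.mpr ⟨hne, Finset.mem_univ _⟩)
    rw [this, Koff_self]
  rw [h1]
  simp only [Koff_eq]
  rw [Finset.sum_comm]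
  refine Finset.sum_congr rfl fun r _ => ?_
  by_cases hr : 1 ≤ (r : ℕ)
  · simp only [hr, true_and, if_true]
    rw [Finset.sum_ite_eq' Finset.univ (x * Equiv.swap (prF r) r)
      (fun _ => p (x r) (x (prF r)) / ((n : ℝ) - 1))]
    simp
  · simp [hr]

lemma card_pos_filter (n : ℕ) (hn : 2 ≤ n) :
    (Finset.univ.filter (fun r : Fin n => 1 ≤ (r : ℕ))).card = n - 1 := by
  have : NeZero n := ⟨by omega⟩
  have he : Finset.univ.filter (fun r : Fin n => 1 ≤ (r : ℕ)) = Finset.univ.erase (0 : Fin n) := by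
    have h0 : ((0 : Fin n) : ℕ) = 0 := by simp
    ext r
    simp only [Finset.mem_filter, Finset.mem_univ, true_and, Finset.mem_erase, ne_eq, and_true,
      Fin.ext_iff, h0]
    omega
  rw [he, Finset.card_erase_of_mem (Finset.mem_univ _)]
  simp

lemma diag_sum (n : ℕ) (hn : 2 ≤ n) (p : Fin n → Fin n → ℝ)
    (hps : ∀ i j : Fin n, i ≠ j → p i j + p j i = 1) (x : Equiv.Perm (Fin n)) :
    (∑ z ∈ Finset.univ.erase x, Koff n p x z) +
      (∑ z ∈ Finset.univ.erase (x * Fin.revPerm), Koff n p (x * Fin.revPerm) z) = 1 := by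
  have h2 : ∑ z ∈ Finset.univ.erase (x * Fin.revPerm), Koff n p (x * Fin.revPerm) z
      = ∑ z ∈ Finset.univ.erase x, Koff n (fun i j => p j i) x z := by
    refine Finset.sum_nbij' (fun z => z * Fin.revPerm) (fun z => z * Fin.revPerm) ?_ ?_ ?_ ?_ ?_
    · intro z hz
      rw [Finset.mem_erase] at hz ⊢
      refine ⟨fun h => hz.1 ?_, Finset.mem_univ _⟩
      beta_reduce at h
      rw [← h, mul_assoc, revPerm_sq, mul_one]
    · intro z hz
      rw [Finset.mem_erase] at hz ⊢
      refine ⟨fun h => hz.1 ?_, Finset.mem_univ _⟩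
      beta_reduce at h
      exact mul_right_cancel h
    · intro z _; beta_reduce; rw [mul_assoc, revPerm_sq, mul_one]
    · intro z _; beta_reduce; rw [mul_assoc, revPerm_sq, mul_one]
    · intro z _
      beta_reduce
      rw [← Koff_rev n p x (z * Fin.revPerm), mul_assoc, revPerm_sq, mul_one]
  rw [h2, rowsum, rowsum, ← Finset.sum_add_distrib]
  have hterm : ∀ r : Fin n,
      ((if 1 ≤ (r : ℕ) then p (x r) (x (prF r)) / ((n : ℝ) - 1) else 0) +
        (if 1 ≤ (r : ℕ) then p (x (prF r)) (x r) / ((n : ℝ) - 1) else 0))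
      = if 1 ≤ (r : ℕ) then 1 / ((n : ℝ) - 1) else 0 := by
    intro r
    by_cases hr : 1 ≤ (r : ℕ)
    · simp only [hr, if_true]
      rw [← add_div]
      have hne : x r ≠ x (prF r) := fun h => (prF_ne r hr) (x.injective h.symm)
      rw [hps _ _ hne]
    · simp [hr]
  rw [Finset.sum_congr rfl fun r _ => hterm r]
  rw [← Finset.sum_filter, Finset.sum_const, card_pos_filter n hn]
  have hne : ((n : ℝ) - 1) ≠ 0 := by
    have : (2 : ℝ) ≤ (n : ℝ) := by exact_mod_cast hn
    linarith
  rw [nsmul_eq_mul]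
  rw [Nat.cast_sub (by omega), Nat.cast_one]
  field_simp

lemma swap_val {n : ℕ} (a b w : Fin n) :
    ((Equiv.swap a b w : Fin n) : ℕ) =
      if (w : ℕ) = (a : ℕ) then (b : ℕ) else if (w : ℕ) = (b : ℕ) then (a : ℕ) else (w : ℕ) := by
  rw [Equiv.swap_apply_def]
  simp only [apply_ite Fin.val, Fin.val_eq_val]

lemma balance {n : ℕ} (p : Fin n → Fin n → ℝ) (x : Equiv.Perm (Fin n)) (r : Fin n)
    (hr : 1 ≤ (r : ℕ)) :
    p (x (prF r)) (x r) * piUn n p (x * Equiv.swap (prF r) r) =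
      p (x r) (x (prF r)) * piUn n p x := by
  set a : Fin n := prF r with ha
  set b : Fin n := r with hb
  have hab : (a : ℕ) + 1 = (b : ℕ) := by
    simp only [ha, prF_val]
    omega
  set S := Finset.univ.filter (fun rs : Fin n × Fin n => rs.1 < rs.2) with hS
  have habmem : (a, b) ∈ S := by
    simp only [hS, Finset.mem_filter, Finset.mem_univ, true_and, Fin.lt_def]
    omega
  set σ := Equiv.swap a b with hσ
  have hswapmem : ∀ rs : Fin n × Fin n, rs ∈ S.erase (a, b) → (σ rs.1, σ rs.2) ∈ S.erase (a, b) := by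
    rintro ⟨u, v⟩ hm
    simp only [Finset.mem_erase, hS, Finset.mem_filter, Finset.mem_univ, true_and, Ne,
      Prod.mk.injEq, Fin.lt_def, not_and] at hm ⊢
    obtain ⟨hne, huv⟩ := hm
    have hne' : ¬((u : ℕ) = (a : ℕ) ∧ (v : ℕ) = (b : ℕ)) := by
      rintro ⟨h1, h2⟩
      exact hne (Fin.val_eq_val u a |>.mp h1) (Fin.val_eq_val v b |>.mp h2)
    have s1 := swap_val a b u
    have s2 := swap_val a b v
    rw [← hσ] at s1 s2
    constructor
    · intro h1 h2
      have hu : u = b := σ.injective (by rw [h1, hσ, Equiv.swap_apply_right])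
      have hv : v = a := σ.injective (by rw [h2, hσ, Equiv.swap_apply_left])
      have e1 := congrArg Fin.val hu
      have e2 := congrArg Fin.val hv
      omega
    · rw [s1, s2]
      split_ifs <;> omega
  have hprod : ∏ rs ∈ S.erase (a, b), p (x (σ rs.1)) (x (σ rs.2))
      = ∏ rs ∈ S.erase (a, b), p (x rs.1) (x rs.2) := by
    refine Finset.prod_nbij' (fun rs => (σ rs.1, σ rs.2)) (fun rs => (σ rs.1, σ rs.2))
      hswapmem hswapmem ?_ ?_ ?_
    · rintro ⟨u, v⟩ _; simp [hσ]
    · rintro ⟨u, v⟩ _; simp [hσ]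
    · rintro ⟨u, v⟩ _; rfl
  have expand1 : piUn n p (x * σ) = p (x (σ a)) (x (σ b)) * ∏ rs ∈ S.erase (a, b), p (x (σ rs.1)) (x (σ rs.2)) := by
    rw [piUn, ← hS, ← Finset.mul_prod_erase S _ habmem]
    rfl
  have expand2 : piUn n p x = p (x a) (x b) * ∏ rs ∈ S.erase (a, b), p (x rs.1) (x rs.2) := by
    rw [piUn, ← hS, ← Finset.mul_prod_erase S _ habmem]
  rw [expand1, expand2, hprod, hσ, Equiv.swap_apply_left, Equiv.swap_apply_right]
  ring

noncomputable def sgR {n : ℕ} (x : Equiv.Perm (Fin n)) : ℝ := ((Equiv.Perm.sign x : ℤ) : ℝ)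

lemma sgR_mul {n : ℕ} (x y : Equiv.Perm (Fin n)) : sgR (x * y) = sgR x * sgR y := by
  simp [sgR]

lemma sgR_swap {n : ℕ} (r : Fin n) (hr : 1 ≤ (r : ℕ)) :
    sgR (Equiv.swap (prF r) r) = -1 := by
  rw [sgR, Equiv.Perm.sign_swap (prF_ne r hr)]
  simp

lemma piUn_pos {n : ℕ} (p : Fin n → Fin n → ℝ)
    (hp : ∀ i j : Fin n, i ≠ j → p i j ∈ Set.Ioo (0 : ℝ) 1) (x : Equiv.Perm (Fin n)) :
    0 < piUn n p x := by
  refine Finset.prod_pos ?_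
  rintro ⟨u, v⟩ hm
  simp only [Finset.mem_filter, Finset.mem_univ, true_and] at hm
  exact (hp _ _ fun h => absurd (x.injective h) (ne_of_lt hm)).1

lemma piDist_pos {n : ℕ} (p : Fin n → Fin n → ℝ)
    (hp : ∀ i j : Fin n, i ≠ j → p i j ∈ Set.Ioo (0 : ℝ) 1) (x : Equiv.Perm (Fin n)) :
    0 < piDist n p x := by
  rw [piDist]
  have h1 : 0 < ∑ y : Equiv.Perm (Fin n), piUn n p y :=
    Finset.sum_pos (fun y _ => piUn_pos p hp y) ⟨1, Finset.mem_univ 1⟩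
  exact mul_pos (inv_pos.mpr h1) (piUn_pos p hp x)

lemma key0 {n : ℕ} (hn : 2 ≤ n) (p : Fin n → Fin n → ℝ)
    (hp : ∀ i j : Fin n, i ≠ j → p i j ∈ Set.Ioo (0 : ℝ) 1)
    (hps : ∀ i j : Fin n, i ≠ j → p i j + p j i = 1)
    (u y : Equiv.Perm (Fin n)) :
    sgR u * piDist n p u * Kmat n p u y =
      ((if u = y then (1:ℝ) else 0) - Kmat n p (u * Fin.revPerm) (y * Fin.revPerm)) *
        sgR y * piDist n p y := by
  by_cases hxy : u = y
  · subst hxy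
    simp only [Kmat, Matrix.of_apply, if_pos rfl, eq_self_iff_true, ite_true]
    have hd := diag_sum n hn p hps u
    have h1 : (1:ℝ) - ∑ z ∈ Finset.univ.erase u, Koff n p u z
        = ∑ z ∈ Finset.univ.erase (u * Fin.revPerm), Koff n p (u * Fin.revPerm) z := by linarith
    rw [h1]
    ring
  · have hxy' : u * Fin.revPerm ≠ y * Fin.revPerm := fun h => hxy (mul_right_cancel h)
    simp only [if_neg hxy, Kmat, Matrix.of_apply, if_neg hxy']
    rw [Koff_rev]
    by_cases hex : ∃ r : Fin n, 1 ≤ (r : ℕ) ∧ y = u * Equiv.swap (prF r) r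
    · obtain ⟨r, hr, rfl⟩ := hex
      rw [Koff_single p u r hr, Koff_single (fun i j => p j i) u r hr]
      rw [sgR_mul, sgR_swap r hr]
      simp only [piDist]
      have hb := balance p u r hr
      set w := (∑ z : Equiv.Perm (Fin n), piUn n p z)⁻¹
      set d := ((n : ℝ) - 1)
      -- goal: sgR u * (w * piUn u) * (p (u r) (u (prF r)) / d)
      --     = (0 - p (u (prF r)) (u r) / d) * (sgR u * -1) * (w * piUn (u * swap))
      linear_combination (-(sgR u * w) / d) * hb
    · rw [Koff_of_not p u y hex, Koff_of_not (fun i j => p j i) u y hex]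
      ring

/-- with `D := diag(pi)`, `E := diag(sgn)`, `B` the reversal permutation
matrix, the matrix `C := E * B * D` is invertible and `I - K = C * K * C⁻¹`;
in particular `K` and `I - K` are similar. -/
theorem IsubK_similar_K (n : ℕ) (hn : 2 ≤ n) (p : Fin n → Fin n → ℝ)
    (hp : ∀ i j : Fin n, i ≠ j → p i j ∈ Set.Ioo (0 : ℝ) 1)
    (hps : ∀ i j : Fin n, i ≠ j → p i j + p j i = 1) :
    IsUnit (Matrix.diagonal (fun x : Equiv.Perm (Fin n) => ((Equiv.Perm.sign x : ℤ) : ℝ)) *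
        Bmat n * Matrix.diagonal (piDist n p)) ∧
    (1 : Matrix (Equiv.Perm (Fin n)) (Equiv.Perm (Fin n)) ℝ) - Kmat n p =
      (Matrix.diagonal (fun x : Equiv.Perm (Fin n) => ((Equiv.Perm.sign x : ℤ) : ℝ)) *
        Bmat n * Matrix.diagonal (piDist n p)) * Kmat n p *
      (Matrix.diagonal (fun x : Equiv.Perm (Fin n) => ((Equiv.Perm.sign x : ℤ) : ℝ)) *
        Bmat n * Matrix.diagonal (piDist n p))⁻¹ := by
  set E := Matrix.diagonal (fun x : Equiv.Perm (Fin n) => ((Equiv.Perm.sign x : ℤ) : ℝ)) with hE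
  set B := Bmat n with hB
  set D := Matrix.diagonal (piDist n p) with hD
  have hEunit : IsUnit E := by
    rw [hE, Matrix.isUnit_iff_isUnit_det, Matrix.det_diagonal, isUnit_iff_ne_zero]
    refine Finset.prod_ne_zero_iff.mpr fun x _ => ?_
    rcases Int.units_eq_one_or (Equiv.Perm.sign x) with h | h <;> simp [h]
  have hBB : B * B = 1 := by
    ext x y
    rw [Matrix.mul_apply]
    simp only [hB, Bmat, Matrix.of_apply]
    simp only [ite_mul, one_mul, zero_mul]
    rw [Finset.sum_ite_eq' Finset.univ (x * Fin.revPerm)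
      (fun z => if y = z * Fin.revPerm then (1:ℝ) else 0)]
    simp only [Finset.mem_univ, if_true]
    rw [mul_assoc, revPerm_sq, mul_one, Matrix.one_apply]
    simp [eq_comm]
  have hBunit : IsUnit B := ⟨⟨B, B, hBB, hBB⟩, rfl⟩
  have hDunit : IsUnit D := by
    rw [hD, Matrix.isUnit_iff_isUnit_det, Matrix.det_diagonal, isUnit_iff_ne_zero]
    exact Finset.prod_ne_zero_iff.mpr fun x _ => (piDist_pos p hp x).ne'
  have hC : IsUnit (E * B * D) := (hEunit.mul hBunit).mul hDunit
  have hEBD : ∀ a b : Equiv.Perm (Fin n), (E * B * D) a b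
      = sgR a * (if b = a * Fin.revPerm then (1:ℝ) else 0) * piDist n p b := by
    intro a b
    rw [hD, Matrix.mul_diagonal, hE, Matrix.diagonal_mul]
    simp only [hB, Bmat, Matrix.of_apply, sgR]
  have hs2 : sgR (Fin.revPerm : Equiv.Perm (Fin n)) * sgR (Fin.revPerm : Equiv.Perm (Fin n)) = 1 := by
    rw [← sgR_mul, revPerm_sq]
    simp [sgR]
  have hcomm : (1 - Kmat n p) * (E * B * D) = (E * B * D) * Kmat n p := by
    ext x y
    rw [Matrix.mul_apply, Matrix.mul_apply]
    have hL : ∀ z, (1 - Kmat n p) x z * (E * B * D) z y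
        = if z = y * Fin.revPerm then (1 - Kmat n p) x z * sgR z * piDist n p y else 0 := by
      intro z
      rw [hEBD]
      by_cases hzy : y = z * Fin.revPerm
      · have hz : z = y * Fin.revPerm := by rw [hzy, mul_assoc, revPerm_sq, mul_one]
        rw [if_pos hzy, if_pos hz]; ring
      · have hz : ¬(z = y * Fin.revPerm) := fun h => hzy (by rw [h, mul_assoc, revPerm_sq, mul_one])
        rw [if_neg hzy, if_neg hz]; ring
    have hR : ∀ z, (E * B * D) x z * Kmat n p z y
        = if z = x * Fin.revPerm then sgR x * piDist n p z * Kmat n p z y else 0 := by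
      intro z
      rw [hEBD]
      by_cases hz : z = x * Fin.revPerm
      · rw [if_pos hz, if_pos hz]; ring
      · rw [if_neg hz, if_neg hz]; ring
    rw [Finset.sum_congr rfl fun z _ => hL z, Finset.sum_congr rfl fun z _ => hR z,
      Finset.sum_ite_eq' Finset.univ (y * Fin.revPerm), Finset.sum_ite_eq' Finset.univ (x * Fin.revPerm)]
    simp only [Finset.mem_univ, if_true]
    have hk := key0 hn p hp hps (x * Fin.revPerm) y
    have hxrr : x * Fin.revPerm * Fin.revPerm = x := by rw [mul_assoc, revPerm_sq, mul_one]
    rw [hxrr] at hk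
    have hiff : (x * Fin.revPerm = y) = (x = y * Fin.revPerm) := by
      apply propext
      constructor
      · intro h; rw [← h, mul_assoc, revPerm_sq, mul_one]
      · intro h; rw [h, mul_assoc, revPerm_sq, mul_one]
    simp only [hiff] at hk
    rw [sgR_mul] at hk
    rw [Matrix.sub_apply, Matrix.one_apply, sgR_mul]
    set srev := sgR (Fin.revPerm : Equiv.Perm (Fin n))
    linear_combination (-srev) * hk +
      (sgR x * piDist n p (x * Fin.revPerm) * Kmat n p (x * Fin.revPerm) y) * hs2
  refine ⟨hC, ?_⟩
  have hdet : IsUnit (E * B * D).det := (Matrix.isUnit_iff_isUnit_det _).mp hC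
  calc (1 : Matrix (Equiv.Perm (Fin n)) (Equiv.Perm (Fin n)) ℝ) - Kmat n p
      = (1 - Kmat n p) * ((E * B * D) * (E * B * D)⁻¹) := by
        rw [Matrix.mul_nonsing_inv _ hdet, mul_one]
    _ = ((1 - Kmat n p) * (E * B * D)) * (E * B * D)⁻¹ := (mul_assoc _ _ _).symm
    _ = ((E * B * D) * Kmat n p) * (E * B * D)⁻¹ := by rw [hcomm]
end

section
/- The characteristic polynomial of K equals the characteristic polynomial of I − K; consequently, λ is an eigenvalue of K with a given algebraic multiplicity if and only if 1 − λ is an eigenvalue of K with the same algebraic multiplicity, and the spectrum of K is contained in the interval [0, 1]. -/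
/-
Reversing a configuration and twisting by the sign of the permutation conjugates `K` into the
transpose of `I - K`: adjacent configurations have opposite signs, and the probability of
leaving `x` plus that of leaving its reversal is `∑ (p_{ij} + p_{ji}) / (n - 1) = 1`. Hence `K`
and `I - K` have the same characteristic polynomial, which is therefore symmetric under
`λ ↦ 1 - λ`.

The chain is reversible with respect to `∏_{r<s} p_{x_r x_s}`, so `K` is similar to a symmetric
matrix and its spectrum is real; being stochastic, its eigenvalues satisfy `|λ| ≤ 1`, and
applying this to `1 - λ` as well confines them to `[0, 1]`.
-/

open Finset

open Polynomial

namespace Matrix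

variable {m : Type*} [Fintype m] [DecidableEq m]

-- `C (-1) * X + C 1` is `1 - X`, written in the shape of `rootMultiplicity_comp_C_mul_X_add_C`.
theorem charpoly_comp_one_sub_X {R : Type*} [CommRing R] (A : Matrix m m R) :
    A.charpoly.comp (C (-1) * X + C 1) = C ((-1) ^ Fintype.card m) * (1 - A).charpoly := by
  have h : (charmatrix A).map (compRingHom (C (-1) * X + C 1)) = -charmatrix (1 - A) := by
    ext i j
    by_cases hij : i = j
    · subst hij; simp; ring
    · simp [hij]
  rw [charpoly, ← coe_compRingHom_apply, RingHom.map_det, RingHom.mapMatrix_apply, h, det_neg,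
    charpoly, C_pow, C_neg, C_1]

theorem rootMultiplicity_charpoly_eq_one_sub {K : Type*} [Field K] {A : Matrix m m K}
    (hA : A.charpoly = (1 - A).charpoly) (μ : K) :
    A.charpoly.rootMultiplicity μ = A.charpoly.rootMultiplicity (1 - μ) := by
  have hu : C ((-1 : K) ^ Fintype.card m) ≠ 0 := C_ne_zero.mpr (pow_ne_zero _ (by norm_num))
  have key := charpoly_comp_one_sub_X A
  rw [← hA] at key
  have hmul := rootMultiplicity_mul (x := μ) (mul_ne_zero hu A.charpoly_monic.ne_zero)
  rw [← key, rootMultiplicity_comp_C_mul_X_add_C _ _ _ _ isUnit_one.neg, rootMultiplicity_C,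
    zero_add] at hmul
  rw [← hmul, neg_one_mul, neg_add_eq_sub]

theorem IsSymm.im_eq_zero_of_isRoot_charpoly_map {S : Matrix m m ℝ} (hS : S.IsSymm) {μ : ℂ}
    (h : (S.map Complex.ofReal).charpoly.IsRoot μ) : μ.im = 0 := by
  have hH : (S.map Complex.ofReal).IsHermitian :=
    (isHermitian_iff_isSymm.2 hS).map _ fun x => (Complex.conj_ofReal x).symm
  have hμ := (mem_roots (charpoly_monic _).ne_zero).2 h
  rw [hH.roots_charpoly_eq_eigenvalues, Multiset.mem_map] at hμ
  obtain ⟨i, -, rfl⟩ := hμ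
  simp

theorem im_eq_zero_of_isRoot_charpoly_map_of_reversible {A : Matrix m m ℝ} {w : m → ℝ}
    (hw : ∀ i, 0 < w i) (hrev : ∀ i j, w i * A i j = w j * A j i) {μ : ℂ}
    (h : (A.map Complex.ofReal).charpoly.IsRoot μ) : μ.im = 0 := by
  set d : m → ℝ := fun i => √(w i)
  have hd : ∀ i, d i ≠ 0 := fun i => (Real.sqrt_pos.2 (hw i)).ne'
  have hdd : ∀ i, d i * d i = w i := fun i => Real.mul_self_sqrt (hw i).le
  set S := diagonal d * A * diagonal d⁻¹
  have hS : S.IsSymm := by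
    refine IsSymm.ext fun i j => ?_
    simp only [S, mul_diagonal, diagonal_mul, Pi.inv_apply]
    field_simp [hd i, hd j]
    linear_combination hrev j i + A j i * hdd j - A i j * hdd i
  have hSA : S.charpoly = A.charpoly := by
    rw [charpoly_mul_comm, ← mul_assoc, diagonal_mul_diagonal]
    simp [hd]
  refine hS.im_eq_zero_of_isRoot_charpoly_map ?_
  change (S.map Complex.ofRealHom).charpoly.IsRoot μ
  rwa [charpoly_map, hSA, ← charpoly_map]

theorem norm_le_one_of_isRoot_charpoly_map {A : Matrix m m ℝ} (hA : A ∈ rowStochastic ℝ m)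
    {μ : ℂ} (h : (A.map Complex.ofReal).charpoly.IsRoot μ) : ‖μ‖ ≤ 1 := by
  rw [← charpoly_toLin', ← Module.End.hasEigenvalue_iff_isRoot_charpoly] at h
  obtain ⟨k, hk⟩ := eigenvalue_mem_ball h
  rw [Metric.mem_closedBall, dist_eq_norm] at hk
  have hrow := sum_row_of_mem_rowStochastic hA k
  rw [← Finset.add_sum_erase _ _ (Finset.mem_univ k)] at hrow
  have hnorm : ∀ j, ‖(A.map Complex.ofReal) k j‖ = A k j := fun j => by
    simp [abs_of_nonneg (nonneg_of_mem_rowStochastic hA)]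
  simp only [hnorm] at hk
  calc ‖μ‖ ≤ ‖μ - (A.map Complex.ofReal) k k‖ + ‖(A.map Complex.ofReal) k k‖ :=
        norm_le_norm_sub_add _ _
    _ ≤ 1 := by rw [hnorm]; linarith

theorem charpoly_map_eq_charpoly_one_sub {R S : Type*} [CommRing R] [CommRing S] (f : R →+* S)
    {A : Matrix m m R} (hA : A.charpoly = (1 - A).charpoly) :
    (A.map f).charpoly = (1 - A.map f).charpoly := by
  rw [charpoly_map, hA, ← charpoly_map, ← RingHom.mapMatrix_apply, map_sub, map_one,
    RingHom.mapMatrix_apply]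

theorem re_mem_Icc_of_isRoot_charpoly_map {A : Matrix m m ℝ} (hA : A ∈ rowStochastic ℝ m)
    (hA1 : A.charpoly = (1 - A).charpoly) {μ : ℂ}
    (h : (A.map Complex.ofReal).charpoly.IsRoot μ) : μ.re ∈ Set.Icc 0 1 := by
  have hne := (charpoly_monic (A.map Complex.ofReal)).ne_zero
  have hmult : ∀ ν, (A.map Complex.ofReal).charpoly.rootMultiplicity ν =
      (A.map Complex.ofReal).charpoly.rootMultiplicity (1 - ν) :=
    rootMultiplicity_charpoly_eq_one_sub (charpoly_map_eq_charpoly_one_sub Complex.ofRealHom hA1)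
  have h' : (A.map Complex.ofReal).charpoly.IsRoot (1 - μ) := by
    rwa [← rootMultiplicity_pos hne, ← hmult, rootMultiplicity_pos hne]
  have h1 := abs_le.1 ((Complex.abs_re_le_norm μ).trans (norm_le_one_of_isRoot_charpoly_map hA h))
  have h2 := abs_le.1 ((Complex.abs_re_le_norm _).trans (norm_le_one_of_isRoot_charpoly_map hA h'))
  rw [Complex.sub_re, Complex.one_re] at h2
  constructor <;> linarith [h1.2, h2.2]

end Matrix

namespace AdjacentTranspositionChain

open Equiv
open scoped Matrix

variable {n : ℕ}

def prevPos (r : Fin n) : Fin n := ⟨(r : ℕ) - 1, Nat.lt_of_le_of_lt (Nat.sub_le _ _) r.isLt⟩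

@[simp] lemma val_prevPos (r : Fin n) : (prevPos r : ℕ) = r - 1 := rfl

lemma prevPos_ne {r : Fin n} (hr : 1 ≤ (r : ℕ)) : prevPos r ≠ r := by
  simp only [Ne, Fin.ext_iff, val_prevPos]; omega

/-- The positions `r` that close an adjacent pair `(r - 1, r)`. -/
def adjIndices (n : ℕ) : Finset (Fin n) := {r | 1 ≤ (r : ℕ)}

@[simp] lemma mem_adjIndices {r : Fin n} : r ∈ adjIndices n ↔ 1 ≤ (r : ℕ) := by
  simp [adjIndices]

lemma card_adjIndices : #(adjIndices n) = n - 1 := by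
  rw [adjIndices]
  have h := card_filter_add_card_filter_not (s := univ) (fun r : Fin n => (r : ℕ) < 1)
  simp only [Fin.card_filter_val_lt, not_lt, card_univ, Fintype.card_fin] at h
  omega

lemma val_neg {r : Fin n} (hr : 1 ≤ (r : ℕ)) : ((-r : Fin n) : ℕ) = n - r := by
  rw [Fin.val_neg']
  exact Nat.mod_eq_of_lt (by omega)

lemma one_le_val_neg_iff {r : Fin n} : 1 ≤ ((-r : Fin n) : ℕ) ↔ 1 ≤ (r : ℕ) := by
  rcases Nat.eq_zero_or_pos r with h | h
  · simp [Fin.val_neg', h]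
  · have := r.isLt
    simp only [val_neg h]; omega

lemma rev_neg {r : Fin n} (hr : 1 ≤ (r : ℕ)) : Fin.rev (-r) = prevPos r := by
  have := r.isLt
  simp only [Fin.ext_iff, Fin.val_rev, val_prevPos, val_neg hr]; omega

lemma rev_prevPos_neg {r : Fin n} (hr : 1 ≤ (r : ℕ)) : Fin.rev (prevPos (-r)) = r := by
  have := r.isLt
  simp only [Fin.ext_iff, Fin.val_rev, val_prevPos, val_neg hr]; omega

lemma swap_prevPos_mul_revPerm {r : Fin n} (hr : 1 ≤ (r : ℕ)) :
    swap (prevPos r) r * Fin.revPerm = Fin.revPerm * swap (prevPos (-r)) (-r) := by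
  have h := swap_apply_apply Fin.revPerm (prevPos (-r)) (-r)
  rw [Fin.revPerm_apply, Fin.revPerm_apply, rev_prevPos_neg hr, rev_neg hr, swap_comm] at h
  rw [h, inv_mul_cancel_right]

lemma eq_mul_swap_comm {α : Type*} [DecidableEq α] {x y : Perm α} {a b : α} :
    y = x * swap a b ↔ x = y * swap a b := by
  constructor <;> rintro rfl <;> simp [mul_assoc]

lemma Koff_def (p : Fin n → Fin n → ℝ) (x y : Perm (Fin n)) :
    Koff n p x y = ∑ r : Fin n,
      if 1 ≤ (r : ℕ) ∧ y = x * swap (prevPos r) r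
      then p (x r) (x (prevPos r)) / ((n : ℝ) - 1) else 0 := rfl

lemma Koff_nonneg {p : Fin n → Fin n → ℝ} (hp : ∀ i j, i ≠ j → 0 ≤ p i j)
    (x y : Perm (Fin n)) : 0 ≤ Koff n p x y := by
  refine sum_nonneg fun r _ => ?_
  split_ifs with h
  · have : (1 : ℝ) ≤ n := by exact_mod_cast r.pos
    have := hp _ _ (x.injective.ne (prevPos_ne h.1).symm)
    exact div_nonneg this (by linarith)
  · exact le_rfl

lemma sign_eq_neg_of_Koff_ne_zero {p : Fin n → Fin n → ℝ} {x y : Perm (Fin n)}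
    (h : Koff n p x y ≠ 0) : Perm.sign y = -Perm.sign x := by
  rw [Koff_def] at h
  obtain ⟨r, -, hr⟩ := exists_ne_zero_of_sum_ne_zero h
  obtain ⟨h1, rfl⟩ := (ite_ne_right_iff.1 hr).1
  rw [Perm.sign_mul, Perm.sign_swap (prevPos_ne h1), mul_neg_one]

lemma Koff_eq_Koff_mul_revPerm (p : Fin n → Fin n → ℝ) (x y : Perm (Fin n)) :
    Koff n p x y = Koff n p (y * Fin.revPerm) (x * Fin.revPerm) := by
  rw [Koff_def, Koff_def]
  refine Fintype.sum_equiv (Equiv.neg (Fin n)) _ _ fun r => ?_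
  simp only [Equiv.neg_apply, one_le_val_neg_iff]
  by_cases hr : 1 ≤ (r : ℕ)
  · have hxy : x * Fin.revPerm = y * Fin.revPerm * swap (prevPos (-r)) (-r) ↔
        y = x * swap (prevPos r) r := by
      rw [mul_assoc y, ← swap_prevPos_mul_revPerm hr, ← mul_assoc, mul_left_inj,
        eq_mul_swap_comm]
    simp only [hr, true_and, hxy]
    split_ifs with h
    · subst h
      simp [Perm.mul_apply, rev_neg hr, rev_prevPos_neg hr]
    · rfl
  · simp [hr]

noncomputable def leaveProb (p : Fin n → Fin n → ℝ) (x : Perm (Fin n)) : ℝ :=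
  ∑ r ∈ adjIndices n, p (x r) (x (prevPos r)) / ((n : ℝ) - 1)

lemma sum_erase_Koff (p : Fin n → Fin n → ℝ) (x : Perm (Fin n)) :
    ∑ y ∈ univ.erase x, Koff n p x y = leaveProb p x := by
  simp only [Koff_def, leaveProb]
  rw [sum_comm, adjIndices, sum_filter]
  refine sum_congr rfl fun r _ => ?_
  by_cases hr : 1 ≤ (r : ℕ)
  · have hmem : x * swap (prevPos r) r ∈ univ.erase x := by
      simpa [swap_eq_one_iff] using (prevPos_ne hr)
    simp only [hr, true_and, if_true]
    rw [sum_ite_eq' _ _ (fun _ => p (x r) (x (prevPos r)) / ((n : ℝ) - 1)), if_pos hmem]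
  · simp [hr]

lemma sum_adjIndices_const_div (hn : 2 ≤ n) (c : ℝ) :
    ∑ _r ∈ adjIndices n, c / ((n : ℝ) - 1) = c := by
  have : (n : ℝ) - 1 ≠ 0 := by
    have : (2 : ℝ) ≤ n := by exact_mod_cast hn
    linarith
  rw [sum_const, card_adjIndices, nsmul_eq_mul, Nat.cast_sub (by omega), Nat.cast_one]
  field_simp

lemma leaveProb_le_one (hn : 2 ≤ n) {p : Fin n → Fin n → ℝ}
    (hp : ∀ i j, i ≠ j → p i j ≤ 1) (x : Perm (Fin n)) : leaveProb p x ≤ 1 := by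
  have : (1 : ℝ) ≤ n := by exact_mod_cast (by omega : 1 ≤ n)
  calc leaveProb p x ≤ ∑ _r ∈ adjIndices n, 1 / ((n : ℝ) - 1) := by
        refine sum_le_sum fun r hr => div_le_div_of_nonneg_right ?_ (by linarith)
        exact hp _ _ (x.injective.ne (prevPos_ne (mem_adjIndices.1 hr)).symm)
    _ = 1 := sum_adjIndices_const_div hn 1

/-- Reversing a configuration reverses the order of every adjacent pair, so by
`p i j + p j i = 1` the leaving probabilities of `x` and of its reversal add up to one. -/
lemma leaveProb_add_leaveProb_mul_revPerm (hn : 2 ≤ n) {p : Fin n → Fin n → ℝ}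
    (hps : ∀ i j, i ≠ j → p i j + p j i = 1) (x : Perm (Fin n)) :
    leaveProb p x + leaveProb p (x * Fin.revPerm) = 1 := by
  have hrev : leaveProb p (x * Fin.revPerm) =
      ∑ r ∈ adjIndices n, p (x (prevPos r)) (x r) / ((n : ℝ) - 1) := by
    refine (sum_equiv (Equiv.neg (Fin n)) (fun r => ?_) fun r hr => ?_).symm
    · simp [one_le_val_neg_iff]
    · have hr := (mem_adjIndices.1 hr)
      simp [Perm.mul_apply, rev_neg hr, rev_prevPos_neg hr]
  rw [hrev, leaveProb, ← sum_add_distrib]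
  refine (sum_congr rfl fun r hr => ?_).trans (sum_adjIndices_const_div hn 1)
  rw [← add_div, hps _ _ (x.injective.ne (prevPos_ne (mem_adjIndices.1 hr)).symm)]

lemma Kmat_apply_self (p : Fin n → Fin n → ℝ) (x : Perm (Fin n)) :
    Kmat n p x x = 1 - leaveProb p x := by
  rw [Kmat, Matrix.of_apply, if_pos rfl, sum_erase_Koff]

lemma Kmat_apply_of_ne (p : Fin n → Fin n → ℝ) {x y : Perm (Fin n)} (h : x ≠ y) :
    Kmat n p x y = Koff n p x y := by
  simp [Kmat, h]

lemma Kmat_mem_rowStochastic (hn : 2 ≤ n) {p : Fin n → Fin n → ℝ}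
    (hp : ∀ i j, i ≠ j → p i j ∈ Set.Icc 0 1) :
    Kmat n p ∈ Matrix.rowStochastic ℝ _ := by
  refine Matrix.mem_rowStochastic_iff_sum.2 ⟨fun x y => ?_, fun x => ?_⟩
  · obtain rfl | hxy := eq_or_ne x y
    · rw [Kmat_apply_self, sub_nonneg]
      exact leaveProb_le_one hn (fun i j h => (hp i j h).2) x
    · rw [Kmat_apply_of_ne p hxy]
      exact Koff_nonneg (fun i j h => (hp i j h).1) x y
  · rw [← add_sum_erase _ _ (mem_univ x), Kmat_apply_self,
      sum_congr rfl fun y hy => Kmat_apply_of_ne p (ne_of_mem_erase hy).symm, sum_erase_Koff]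
    ring

lemma sign_mul_sign (x : Perm (Fin n)) :
    ((Perm.sign x : ℤ) : ℝ) * ((Perm.sign x : ℤ) : ℝ) = 1 := by
  rw [← Int.cast_mul, ← Units.val_mul, Int.units_mul_self, Units.val_one, Int.cast_one]

/-- Off the diagonal this is `Koff_eq_Koff_mul_revPerm` plus the sign flip between adjacent
configurations; on the diagonal it is `leaveProb_add_leaveProb_mul_revPerm`. -/
lemma one_sub_Kmat_eq (hn : 2 ≤ n) {p : Fin n → Fin n → ℝ}
    (hps : ∀ i j, i ≠ j → p i j + p j i = 1) :
    1 - Kmat n p = Matrix.diagonal (fun x => ((Perm.sign x : ℤ) : ℝ)) *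
      (Kmat n p)ᵀ.submatrix (Equiv.mulRight Fin.revPerm) (Equiv.mulRight Fin.revPerm) *
      Matrix.diagonal (fun x => ((Perm.sign x : ℤ) : ℝ)) := by
  ext x y
  simp only [Matrix.sub_apply, Matrix.one_apply, Matrix.mul_diagonal, Matrix.diagonal_mul,
    Matrix.submatrix_apply, Matrix.transpose_apply, coe_mulRight]
  obtain rfl | hxy := eq_or_ne x y
  · rw [if_pos rfl, Kmat_apply_self, Kmat_apply_self]
    linear_combination leaveProb_add_leaveProb_mul_revPerm hn hps x +
      (leaveProb p (x * Fin.revPerm) - 1) * sign_mul_sign x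
  · rw [if_neg hxy, Kmat_apply_of_ne p hxy,
      Kmat_apply_of_ne p (mul_left_injective _ |>.ne hxy.symm), ← Koff_eq_Koff_mul_revPerm]
    by_cases hK : Koff n p x y = 0
    · simp [hK]
    · rw [sign_eq_neg_of_Koff_ne_zero hK, Units.val_neg, Int.cast_neg]
      linear_combination Koff n p x y * sign_mul_sign x

theorem charpoly_Kmat_eq_charpoly_one_sub (hn : 2 ≤ n) {p : Fin n → Fin n → ℝ}
    (hps : ∀ i j, i ≠ j → p i j + p j i = 1) :
    (Kmat n p).charpoly = (1 - Kmat n p).charpoly := by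
  rw [one_sub_Kmat_eq hn hps, Matrix.charpoly_mul_comm, ← mul_assoc,
    Matrix.diagonal_mul_diagonal]
  simp only [sign_mul_sign, Matrix.diagonal_one, one_mul]
  rw [← symm_symm (Equiv.mulRight Fin.revPerm), ← Matrix.reindex_apply, Matrix.charpoly_reindex,
    Matrix.charpoly_transpose]

lemma piUn_pos {p : Fin n → Fin n → ℝ} (hp : ∀ i j, i ≠ j → 0 < p i j)
    (x : Perm (Fin n)) :
    0 < piUn n p x :=
  prod_pos fun _ hab => hp _ _ (x.injective.ne (mem_filter.1 hab).2.ne)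

lemma swap_prevPos_lt_swap_prevPos {r a b : Fin n} (hab : a < b)
    (hne : (a, b) ≠ (prevPos r, r)) :
    swap (prevPos r) r a < swap (prevPos r) r b := by
  rw [Ne, Prod.mk.injEq] at hne
  rw [Fin.lt_def] at hab ⊢
  rw [swap_apply_def, swap_apply_def]
  split_ifs <;> simp only [Fin.ext_iff, val_prevPos] at * <;> omega

/-- Swapping the adjacent positions `r - 1 < r` permutes the pairs of positions `a < b` other
than `(r - 1, r)`, so only the factor of that pair changes in `piUn`. -/
lemma piUn_mul_swap_prevPos (p : Fin n → Fin n → ℝ) {r : Fin n} (hr : 1 ≤ (r : ℕ))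
    (x : Perm (Fin n)) :
    piUn n p x * p (x r) (x (prevPos r)) =
      piUn n p (x * swap (prevPos r) r) * p (x (prevPos r)) (x r) := by
  set s := swap (prevPos r) r
  set pairs : Finset (Fin n × Fin n) := {ab | ab.1 < ab.2}
  have hmem : (prevPos r, r) ∈ pairs := by
    simp only [pairs, mem_filter, mem_univ, true_and, Fin.lt_def, val_prevPos]; omega
  have hswap : ∀ ab ∈ pairs.erase (prevPos r, r),
      (s ab.1, s ab.2) ∈ pairs.erase (prevPos r, r) := by
    intro ab hab
    obtain ⟨hne, hlt⟩ := mem_erase.1 hab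
    have hlt := (mem_filter.1 hlt).2
    refine mem_erase.2
      ⟨fun h => ?_, mem_filter.2 ⟨mem_univ _, swap_prevPos_lt_swap_prevPos hlt hne⟩⟩
    obtain ⟨h1, h2⟩ := Prod.mk.inj h
    have ha : ab.1 = r := by simpa [s] using congrArg s h1
    have hb : ab.2 = prevPos r := by simpa [s] using congrArg s h2
    rw [ha, hb, Fin.lt_def, val_prevPos] at hlt
    omega
  have hrest : ∏ ab ∈ pairs.erase (prevPos r, r), p ((x * s) ab.1) ((x * s) ab.2) =
      ∏ ab ∈ pairs.erase (prevPos r, r), p (x ab.1) (x ab.2) :=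
    prod_nbij' (fun ab => (s ab.1, s ab.2)) (fun ab => (s ab.1, s ab.2)) hswap hswap
      (fun ab _ => by simp [s]) (fun ab _ => by simp [s]) (fun ab _ => rfl)
  simp only [piUn]
  rw [← mul_prod_erase _ _ hmem, ← mul_prod_erase _ _ hmem, hrest]
  simp [s, Perm.mul_apply]
  ring

lemma piUn_mul_Kmat_comm (p : Fin n → Fin n → ℝ) (x y : Perm (Fin n)) :
    piUn n p x * Kmat n p x y = piUn n p y * Kmat n p y x := by
  obtain rfl | hxy := eq_or_ne x y
  · rfl
  rw [Kmat_apply_of_ne p hxy, Kmat_apply_of_ne p hxy.symm, Koff_def, Koff_def, mul_sum, mul_sum]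
  refine sum_congr rfl fun r _ => ?_
  simp only [← eq_mul_swap_comm (x := x)]
  split_ifs with h
  · obtain ⟨hr, rfl⟩ := h
    simp only [Perm.mul_apply, swap_apply_left, swap_apply_right, mul_div_assoc']
    rw [piUn_mul_swap_prevPos p hr x]
  · simp

end AdjacentTranspositionChain

/-- the characteristic polynomial of `K` equals that of `I - K`;
consequently `lam` is an eigenvalue of `K` with a given algebraic multiplicity iff
`1 - lam` is an eigenvalue with the same algebraic multiplicity, and the spectrum of
`K` lies in `[0, 1]`. -/
theorem charpoly_K_eq_charpoly_one_sub_K (n : ℕ) (hn : 2 ≤ n) (p : Fin n → Fin n → ℝ)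
    (hp : ∀ i j : Fin n, i ≠ j → p i j ∈ Set.Ioo (0 : ℝ) 1)
    (hps : ∀ i j : Fin n, i ≠ j → p i j + p j i = 1) :
    (Kmat n p).charpoly =
      ((1 : Matrix (Equiv.Perm (Fin n)) (Equiv.Perm (Fin n)) ℝ) - Kmat n p).charpoly ∧
    (∀ μ : ℂ, Polynomial.rootMultiplicity μ (((Kmat n p).map Complex.ofReal).charpoly) =
      Polynomial.rootMultiplicity (1 - μ) (((Kmat n p).map Complex.ofReal).charpoly)) ∧
    (∀ μ : ℂ, (((Kmat n p).map Complex.ofReal).charpoly).IsRoot μ →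
      μ.im = 0 ∧ 0 ≤ μ.re ∧ μ.re ≤ 1) := by
  open AdjacentTranspositionChain in
  have hK := charpoly_Kmat_eq_charpoly_one_sub hn hps
  have hstoch := Kmat_mem_rowStochastic hn fun i j h => Set.Ioo_subset_Icc_self (hp i j h)
  refine ⟨hK, Matrix.rootMultiplicity_charpoly_eq_one_sub
    (Matrix.charpoly_map_eq_charpoly_one_sub Complex.ofRealHom hK), fun μ hμ => ⟨?_, ?_⟩⟩
  · exact Matrix.im_eq_zero_of_isRoot_charpoly_map_of_reversible
      (piUn_pos fun i j h => (hp i j h).1) (piUn_mul_Kmat_comm p) hμ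
  · exact Matrix.re_mem_Icc_of_isRoot_charpoly_map hstoch hK hμ
end

section
/- Let n ≥ 2 and let P be the n × n real matrix with P_{r,r+1} = P_{r+1,r} = 1/(2(n−1)) for 1 ≤ r ≤ n−1, P_{r,s} = 0 for all other s ≠ r, and P_{r,r} = 1 − Σ_{s≠r} P_{r,s}. Then the eigenvalues of P are exactly (n − 2 + cos(kπ/n))/(n − 1) for k = 0, 1, …, n−1; in particular the second-largest eigenvalue of P is 1 − (1 − cos(π/n))/(n − 1), so the spectral gap of P equals (1 − cos(π/n))/(n − 1). -/
open Finset

/-- Off-diagonal entries of the slowed-down random walk on the path `{1, ..., n}`: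
from `r` it moves to each neighbour with probability `1/(2(n-1))`. -/
noncomputable def Poff (n : ℕ) (r s : Fin n) : ℝ :=
  if (s : ℕ) = (r : ℕ) + 1 ∨ (r : ℕ) = (s : ℕ) + 1 then 1 / (2 * ((n : ℝ) - 1)) else 0

/-- The transition matrix `P` of the slowed-down random walk on the path `{1, ..., n}`. -/
noncomputable def Pmat (n : ℕ) : Matrix (Fin n) (Fin n) ℝ :=
  Matrix.of fun r s =>
    if r = s then 1 - ∑ t ∈ Finset.univ.erase r, Poff n r t
    else Poff n r s

/-! `P = I + Δ / (2(n-1))`, where `Δ` is the discrete Laplacian of the path with reflecting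
(Neumann) boundary. The vectors `v_k(m) = cos((2m+1)kπ/(2n))`, `k < n`, sample `cos` at the
midpoints of `n` equal cells of `[0, kπ]`; extended to all `m ∈ ℤ` they are even about `-1/2` and
`n - 1/2`, so the boundary rows of `P` act on them like interior rows, and
`cos(x + 2θ) + cos(x - 2θ) = 2 cos 2θ cos x` gives `P v_k = λ_k v_k` with
`λ_k = (n - 2 + cos(kπ/n))/(n - 1)`. These `λ_k` strictly decrease in `k`, so they are `n`
distinct roots of the degree-`n` characteristic polynomial, hence all of its roots, and the second
largest is `λ_1`. -/

open Polynomial Real Matrix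

theorem Matrix.isRoot_charpoly_of_mulVec_eq_smul {ι R : Type*} [Fintype ι] [DecidableEq ι]
    [CommRing R] [IsDomain R] {A : Matrix ι ι R} {v : ι → R} {μ : R} (hv : v ≠ 0)
    (h : A *ᵥ v = μ • v) : A.charpoly.IsRoot μ := by
  rw [IsRoot, eval_charpoly, ← exists_mulVec_eq_zero_iff]
  refine ⟨v, hv, ?_⟩
  ext i
  simp [sub_mulVec, h]

theorem Matrix.charpoly_roots_eq_map_range {R : Type*} [CommRing R] [IsDomain R] {n : ℕ}
    (A : Matrix (Fin n) (Fin n) R) {f : ℕ → R} (hf : Set.InjOn f (Set.Iio n))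
    (hroot : ∀ k < n, A.charpoly.IsRoot (f k)) :
    A.charpoly.roots = (Multiset.range n).map f := by
  classical
  rw [← Finset.range_val, ← image_val_of_injOn (by rwa [coe_range])]
  refine roots_eq_of_natDegree_le_card_of_ne_zero (fun x hx => ?_) ?_ A.charpoly_monic.ne_zero
  · obtain ⟨k, hk, rfl⟩ := mem_image.mp hx
    exact hroot k (mem_range.mp hk)
  · rw [charpoly_natDegree_eq_dim, Fintype.card_fin, card_image_of_injOn (by rwa [coe_range]),
      card_range]

theorem List.eq_map_range_of_pairwise_ge {α : Type*} [PartialOrder α] {f : ℕ → α} {n : ℕ}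
    (hf : AntitoneOn f (Set.Iio n)) {l : List α} (hl : l.Pairwise (· ≥ ·))
    (h : (l : Multiset α) = (Multiset.range n).map f) : l = (List.range n).map f := by
  have hsorted : ((List.range n).map f).Pairwise (· ≥ ·) :=
    List.pairwise_map.mpr <| List.pairwise_lt_range.imp_of_mem fun ha hb hab =>
      hf (List.mem_range.mp ha) (List.mem_range.mp hb) hab.le
  rw [Multiset.range, Multiset.map_coe, Multiset.coe_eq_coe] at h
  exact h.eq_of_pairwise' hl hsorted

lemma Pmat_mulVec_apply (n : ℕ) (v : Fin n → ℝ) (r : Fin n) :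
    (Pmat n *ᵥ v) r = v r + ∑ t, Poff n r t * (v t - v r) := by
  have hself : Poff n r r = 0 := if_neg (by omega)
  have hoff : ∀ s ∈ univ.erase r, Pmat n r s * v s = Poff n r s * v s := fun s hs => by
    rw [Pmat, Matrix.of_apply, if_neg (ne_of_mem_erase hs).symm]
  rw [mulVec, dotProduct, ← sum_erase_add _ _ (mem_univ r), sum_congr rfl hoff,
    ← sum_erase_add _ _ (mem_univ r), hself, Pmat, Matrix.of_apply, if_pos rfl]
  simp only [zero_mul, mul_sub, sum_sub_distrib, ← sum_mul]
  ring

lemma sum_Poff_mul (n : ℕ) (r : Fin n) (g : ℕ → ℝ) :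
    ∑ t, Poff n r t * g t =
      ((if (r : ℕ) + 1 < n then g (r + 1) else 0) + (if 0 < (r : ℕ) then g (r - 1) else 0)) /
        (2 * ((n : ℝ) - 1)) := by
  set c : ℝ := 1 / (2 * ((n : ℝ) - 1))
  have hsplit : ∀ t : ℕ, (if t = r + 1 ∨ (r : ℕ) = t + 1 then c else 0) * g t =
      (if t = r + 1 then c * g t else 0) +
        (if t = r - 1 then (if 0 < (r : ℕ) then c * g t else 0) else 0) := by
    intro t
    split_ifs <;> first | omega | ring
  have hr : (r : ℕ) - 1 < n := by omega
  simp only [Poff]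
  rw [Fin.sum_univ_eq_sum_range (fun t => (if t = r + 1 ∨ (r : ℕ) = t + 1 then c else 0) * g t),
    sum_congr rfl fun t _ => hsplit t, sum_add_distrib, sum_ite_eq', sum_ite_eq']
  simp only [mem_range, hr, if_true]
  split_ifs <;> ring

lemma Pmat_mulVec_apply_of_neumann {n : ℕ} (V : ℤ → ℝ) (h₀ : V (-1) = V 0)
    (hn : V n = V (n - 1)) (r : Fin n) :
    (Pmat n *ᵥ fun s => V s) r =
      V r + (V (r + 1) - 2 * V r + V (r - 1)) / (2 * ((n : ℝ) - 1)) := by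
  have htop : ¬ (r : ℕ) + 1 < n → V (r + 1) = V r := fun h => by
    rw [show ((r : ℕ) : ℤ) = n - 1 by omega, sub_add_cancel, hn]
  have hbot : ¬ 0 < (r : ℕ) → V (r - 1) = V r := fun h => by
    rw [show ((r : ℕ) : ℤ) = 0 by omega, zero_sub, h₀]
  rw [Pmat_mulVec_apply, sum_Poff_mul n r fun t => V t - V r]
  split_ifs with hup hlow hlow
  · push_cast [Nat.cast_sub hlow]; ring
  · rw [hbot hlow]; push_cast; ring
  · push_cast [Nat.cast_sub hlow]; rw [htop hup]; ring
  · rw [htop hup, hbot hlow]; ring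

noncomputable def pathEigenvalue (n k : ℕ) : ℝ :=
  ((n : ℝ) - 2 + cos ((k : ℝ) * π / n)) / ((n : ℝ) - 1)

noncomputable def pathEigenvector (n k : ℕ) (m : ℤ) : ℝ :=
  cos ((2 * m + 1) * (k * π / (2 * n)))

lemma pathEigenvector_add_one_add_sub_one (n k : ℕ) (m : ℤ) :
    pathEigenvector n k (m + 1) + pathEigenvector n k (m - 1) =
      2 * cos (k * π / n) * pathEigenvector n k m := by
  have hθ : (k * π / n : ℝ) = 2 * (k * π / (2 * n)) := by
    rcases eq_or_ne (n : ℝ) 0 with h | h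
    · simp [h]
    · field_simp
  simp only [pathEigenvector, hθ]
  push_cast
  rw [show (2 * ((m : ℝ) + 1) + 1) * (k * π / (2 * n)) =
      (2 * m + 1) * (k * π / (2 * n)) + 2 * (k * π / (2 * n)) by ring,
    show (2 * ((m : ℝ) - 1) + 1) * (k * π / (2 * n)) =
      (2 * m + 1) * (k * π / (2 * n)) - 2 * (k * π / (2 * n)) by ring,
    cos_add, cos_sub]
  ring

lemma pathEigenvector_neg_one (n k : ℕ) : pathEigenvector n k (-1) = pathEigenvector n k 0 := by
  simp only [pathEigenvector]
  push_cast
  rw [show (2 * (-1 : ℝ) + 1) * (k * π / (2 * n)) = -((2 * 0 + 1) * (k * π / (2 * n))) by ring,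
    cos_neg]

lemma pathEigenvector_natCast_self (n k : ℕ) :
    pathEigenvector n k n = pathEigenvector n k (n - 1) := by
  rcases eq_or_ne (n : ℝ) 0 with hn | hn
  · simp [pathEigenvector, hn]
  have hsin : sin (k * π) = 0 := sin_nat_mul_pi k
  simp only [pathEigenvector]
  push_cast
  rw [show (2 * (n : ℝ) + 1) * (k * π / (2 * n)) = k * π + k * π / (2 * n) by field_simp,
    show (2 * ((n : ℝ) - 1) + 1) * (k * π / (2 * n)) = k * π - k * π / (2 * n) by
      field_simp; ring,
    cos_add, cos_sub, hsin]
  ring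

lemma pathEigenvector_zero_pos {n k : ℕ} (hk : k < n) : 0 < pathEigenvector n k 0 := by
  have hkn : (k : ℝ) < n := by exact_mod_cast hk
  have hn : (0 : ℝ) < n := by linarith [(k.cast_nonneg : (0 : ℝ) ≤ k)]
  apply cos_pos_of_mem_Ioo
  push_cast
  constructor
  · have : 0 ≤ k * π / (2 * n) := by positivity
    linarith [pi_pos]
  · rw [mul_zero, zero_add, one_mul, div_lt_div_iff₀ (by positivity) two_pos]
    nlinarith [pi_pos]

lemma Pmat_mulVec_pathEigenvector {n : ℕ} (hn : 1 < n) (k : ℕ) :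
    (Pmat n *ᵥ fun s : Fin n => pathEigenvector n k s) =
      pathEigenvalue n k • fun s : Fin n => pathEigenvector n k s := by
  have hn1 : (n : ℝ) - 1 ≠ 0 := sub_ne_zero.mpr (by exact_mod_cast hn.ne')
  ext r
  rw [Pmat_mulVec_apply_of_neumann _ (pathEigenvector_neg_one n k)
    (pathEigenvector_natCast_self n k), Pi.smul_apply, smul_eq_mul, pathEigenvalue]
  have := pathEigenvector_add_one_add_sub_one n k r
  field_simp
  linear_combination this

lemma pathEigenvalue_strictAntiOn {n : ℕ} (hn : 1 < n) :
    StrictAntiOn (pathEigenvalue n) (Set.Iio n) := by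
  have hn0 : (0 : ℝ) < n := by positivity
  have hn1 : (0 : ℝ) < n - 1 := sub_pos.mpr (by exact_mod_cast hn)
  have hangle : ∀ k ∈ Set.Iio n, (k : ℝ) * π / n ∈ Set.Icc 0 π := fun k hk => by
    have hkn : (k : ℝ) ≤ n := by exact_mod_cast (Set.mem_Iio.mp hk).le
    refine ⟨by positivity, ?_⟩
    rw [div_le_iff₀ hn0]
    nlinarith [pi_pos]
  intro i hi j hj hij
  have hcos : cos (j * π / n) < cos (i * π / n) :=
    strictAntiOn_cos (hangle i hi) (hangle j hj) (by gcongr)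
  exact div_lt_div_of_pos_right (by linarith) hn1

/-- the eigenvalues of `P` are exactly `(n - 2 + cos(kπ/n))/(n-1)` for
`k = 0, 1, ..., n-1`; in particular the second-largest eigenvalue of `P` is
`1 - (1 - cos(π/n))/(n-1)`, so the spectral gap of `P` is `(1 - cos(π/n))/(n-1)`. -/
theorem path_walk_eigenvalues (n : ℕ) (hn : 2 ≤ n) :
    (Pmat n).charpoly.roots =
      (Multiset.range n).map
        (fun k => ((n : ℝ) - 2 + Real.cos ((k : ℝ) * Real.pi / n)) / ((n : ℝ) - 1)) ∧
    ∀ l : List ℝ, l.Pairwise (· ≥ ·) → (l : Multiset ℝ) = (Pmat n).charpoly.roots →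
      l[1]? = some (1 - (1 - Real.cos (Real.pi / n)) / ((n : ℝ) - 1)) := by
  have hanti := pathEigenvalue_strictAntiOn hn
  have hroots : (Pmat n).charpoly.roots = (Multiset.range n).map (pathEigenvalue n) :=
    (Pmat n).charpoly_roots_eq_map_range hanti.injOn fun k hk =>
      isRoot_charpoly_of_mulVec_eq_smul
        (fun h => (pathEigenvector_zero_pos hk).ne' (congrFun h ⟨0, by omega⟩))
        (Pmat_mulVec_pathEigenvector hn k)
  refine ⟨?_, fun l hl hlroots => ?_⟩
  · -- the statement's `Multiset.range n` is lifted to `Multiset ℝ` through the monad structure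
    rw [hroots]
    simp only [Multiset.pure_def, Multiset.bind_def, Multiset.bind_singleton, Multiset.map_map,
      Function.comp_def]
    rfl
  · have hn1 : (n : ℝ) - 1 ≠ 0 := sub_ne_zero.mpr (by exact_mod_cast (by omega : n ≠ 1))
    rw [List.eq_map_range_of_pairwise_ge hanti.antitoneOn hl (hlroots.trans hroots),
      List.getElem?_map, List.getElem?_range (by omega), Option.map_some, pathEigenvalue]
    congr 1
    rw [Nat.cast_one, one_mul]
    field_simp
    ring
end

section
/- Let a, b, c ∈ (0,1) satisfy a ≥ 1/2, b ≥ 1/2, c ≥ a, and c ≥ b. Then a·b·(1−c) + (1−a)·(1−b)·c ≤ 1/4, with equality if and only if a = 1/2 and b = 1/2. Consequently, for n = 3 and any regular parameter vector p (taking a = p_{12}, b = p_{23}, c = p_{13}), the spectral gap λ_K = (1/2)·[1 − (a b (1−c) + (1−a)(1−b) c)^{1/2}] satisfies λ_K ≥ 1/4, with equality if and only if p_{12} = p_{23} = 1/2. -/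
/-!
The identity
`a b (1 - c) + (1 - a)(1 - b) c = 1/4 - (a - 1/2)^2 - (a + b - 1)(c - a)`
exhibits the cycle weight as `1/4` minus two terms that are nonnegative under regularity.
Equality forces `a = 1/2`, after which the second term is `(b - 1/2)(c - 1/2)`, and
`c ≥ b ≥ 1/2` then forces `b = 1/2`.
-/

theorem three_cycle_weight_eq (a b c : ℝ) :
    a * b * (1 - c) + (1 - a) * (1 - b) * c = 1 / 4 - (a - 1 / 2) ^ 2 - (a + b - 1) * (c - a) := by
  ring

theorem three_cycle_weight_le_quarter {a b c : ℝ} (hab : 1 ≤ a + b) (hca : a ≤ c) :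
    a * b * (1 - c) + (1 - a) * (1 - b) * c ≤ 1 / 4 := by
  rw [three_cycle_weight_eq]
  nlinarith [sq_nonneg (a - 1 / 2), mul_nonneg (sub_nonneg.2 hab) (sub_nonneg.2 hca)]

theorem three_cycle_weight_eq_quarter_iff {a b c : ℝ} (ha : 1 / 2 ≤ a) (hb : 1 / 2 ≤ b)
    (hca : a ≤ c) (hcb : b ≤ c) :
    a * b * (1 - c) + (1 - a) * (1 - b) * c = 1 / 4 ↔ a = 1 / 2 ∧ b = 1 / 2 := by
  rw [three_cycle_weight_eq]
  constructor
  · intro h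
    have hsq : 0 ≤ (a - 1 / 2) ^ 2 := sq_nonneg _
    have hprod : 0 ≤ (a + b - 1) * (c - a) := mul_nonneg (by linarith) (by linarith)
    have ha' : a = 1 / 2 := by nlinarith
    subst ha'
    have hbc : (b - 1 / 2) * (c - 1 / 2) = 0 := by linarith
    rcases mul_eq_zero.1 hbc with h | h <;> exact ⟨rfl, by linarith⟩
  · rintro ⟨rfl, rfl⟩
    ring

theorem quarter_le_half_mul_one_sub_sqrt_iff (x : ℝ) :
    1 / 4 ≤ 1 / 2 * (1 - √x) ↔ x ≤ 1 / 4 := by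
  rw [show 1 / 4 ≤ 1 / 2 * (1 - √x) ↔ √x ≤ 1 / 2 by constructor <;> intro h <;> linarith,
    Real.sqrt_le_left (by norm_num)]
  norm_num

theorem half_mul_one_sub_sqrt_eq_quarter_iff (x : ℝ) :
    1 / 2 * (1 - √x) = 1 / 4 ↔ x = 1 / 4 := by
  rw [show 1 / 2 * (1 - √x) = 1 / 4 ↔ √x = 1 / 2 by constructor <;> intro h <;> linarith,
    Real.sqrt_eq_iff_mul_self_eq_of_pos (by norm_num)]
  constructor <;> intro h <;> linarith

theorem n_three_gap_minimized_general (a b c : ℝ)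
    (ha2 : 1 / 2 ≤ a) (hb2 : 1 / 2 ≤ b) (hca : a ≤ c) (hcb : b ≤ c) :
    a * b * (1 - c) + (1 - a) * (1 - b) * c ≤ 1 / 4 ∧
    (a * b * (1 - c) + (1 - a) * (1 - b) * c = 1 / 4 ↔ a = 1 / 2 ∧ b = 1 / 2) ∧
    1 / 4 ≤ (1 / 2) * (1 - Real.sqrt (a * b * (1 - c) + (1 - a) * (1 - b) * c)) ∧
    ((1 / 2) * (1 - Real.sqrt (a * b * (1 - c) + (1 - a) * (1 - b) * c)) = 1 / 4 ↔
      a = 1 / 2 ∧ b = 1 / 2) := by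
  have hle := three_cycle_weight_le_quarter (by linarith : 1 ≤ a + b) hca
  have hiff := three_cycle_weight_eq_quarter_iff ha2 hb2 hca hcb
  exact ⟨hle, hiff, (quarter_le_half_mul_one_sub_sqrt_iff _).2 hle,
    (half_mul_one_sub_sqrt_eq_quarter_iff _).trans hiff⟩

/-- for `a, b, c ∈ (0,1)` with `a ≥ 1/2`, `b ≥ 1/2`, `c ≥ a`, `c ≥ b`,
we have `a·b·(1-c) + (1-a)·(1-b)·c ≤ 1/4`, with equality iff `a = 1/2` and `b = 1/2`.
Consequently, for `n = 3` and regular `p` (with `a = p₁₂`, `b = p₂₃`, `c = p₁₃`),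
the spectral gap `λ_K = (1/2)(1 - √(a b (1-c) + (1-a)(1-b) c))` satisfies
`λ_K ≥ 1/4`, with equality iff `p₁₂ = p₂₃ = 1/2`. -/
theorem n_three_gap_minimized (a b c : ℝ)
    (ha : a ∈ Set.Ioo (0 : ℝ) 1) (hb : b ∈ Set.Ioo (0 : ℝ) 1) (hc : c ∈ Set.Ioo (0 : ℝ) 1)
    (ha2 : 1 / 2 ≤ a) (hb2 : 1 / 2 ≤ b) (hca : a ≤ c) (hcb : b ≤ c) :
    a * b * (1 - c) + (1 - a) * (1 - b) * c ≤ 1 / 4 ∧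
    (a * b * (1 - c) + (1 - a) * (1 - b) * c = 1 / 4 ↔ a = 1 / 2 ∧ b = 1 / 2) ∧
    1 / 4 ≤ (1 / 2) * (1 - Real.sqrt (a * b * (1 - c) + (1 - a) * (1 - b) * c)) ∧
    ((1 / 2) * (1 - Real.sqrt (a * b * (1 - c) + (1 - a) * (1 - b) * c)) = 1 / 4 ↔
      a = 1 / 2 ∧ b = 1 / 2) :=
  n_three_gap_minimized_general a b c ha2 hb2 hca hcb
end
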